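/- Under the stated assumptions, if the tangential velocity satisfies the uniform redistribution equation ∂_s v_T(u,t) = κ(u,t) v_N(u,t) − (1/L(Γ_t)) ∫₀¹ κ v_N g du for all u and t, then the relative local length is constant in time: g(u,t)/L(Γ_t) = g(u,0)/L(Γ_0) for all u ∈ [0,1] and t ≥ 0. -/

import Mathlib

noncomputable section

open Real MeasureTheory

/-- The cross product on `EuclideanSpace ℝ (Fin 3)`. -/
def cross3 (a b : EuclideanSpace ℝ (Fin 3)) : EuclideanSpace ℝ (Fin 3) :=
  (WithLp.equiv 2 (Fin 3 → ℝ)).symm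
    ![a 1 * b 2 - a 2 * b 1, a 2 * b 0 - a 0 * b 2, a 0 * b 1 - a 1 * b 0]

/-- Partial derivative with respect to the first (spatial) variable `u`. -/
def pu {α : Type*} [NormedAddCommGroup α] [NormedSpace ℝ α]
    (f : ℝ × ℝ → α) (p : ℝ × ℝ) : α :=
  deriv (fun u => f (u, p.2)) p.1

/-- Partial derivative with respect to the second (time) variable `t`. -/
def pt {α : Type*} [NormedAddCommGroup α] [NormedSpace ℝ α]
    (f : ℝ × ℝ → α) (p : ℝ × ℝ) : α :=
  deriv (fun t => f (p.1, t)) p.2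

/-- Arc-length derivative `∂_s = g⁻¹ ∂_u` along the curves parametrized by `X`. -/
def Ds (X : ℝ × ℝ → EuclideanSpace ℝ (Fin 3)) {α : Type*}
    [NormedAddCommGroup α] [NormedSpace ℝ α] (f : ℝ × ℝ → α) (p : ℝ × ℝ) : α :=
  ‖pu X p‖⁻¹ • pu f p

section Aux

variable {α : Type*} [NormedAddCommGroup α] [NormedSpace ℝ α]

lemma hasDerivAt_sliceU (f : ℝ × ℝ → α) (p : ℝ × ℝ) (hf : DifferentiableAt ℝ f p) :
    HasDerivAt (fun u => f (u, p.2)) (fderiv ℝ f p (1, 0)) p.1 := by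
  have h1 : HasDerivAt (fun u : ℝ => (u, p.2)) ((1 : ℝ), (0 : ℝ)) p.1 :=
    (hasDerivAt_id p.1).prodMk (hasDerivAt_const _ _)
  have := hf.hasFDerivAt.comp_hasDerivAt p.1 (by simpa using h1)
  simpa [Function.comp_def] using this

lemma pu_eq (f : ℝ × ℝ → α) (p : ℝ × ℝ) (hf : DifferentiableAt ℝ f p) :
    pu f p = fderiv ℝ f p (1, 0) := (hasDerivAt_sliceU f p hf).deriv

lemma hasDerivAt_sliceU' (f : ℝ × ℝ → α) (p : ℝ × ℝ) (hf : DifferentiableAt ℝ f p) :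
    HasDerivAt (fun u => f (u, p.2)) (pu f p) p.1 := by
  rw [pu_eq f p hf]; exact hasDerivAt_sliceU f p hf

lemma hasDerivAt_sliceT (f : ℝ × ℝ → α) (p : ℝ × ℝ) (hf : DifferentiableAt ℝ f p) :
    HasDerivAt (fun t => f (p.1, t)) (fderiv ℝ f p (0, 1)) p.2 := by
  have h1 : HasDerivAt (fun t : ℝ => (p.1, t)) ((0 : ℝ), (1 : ℝ)) p.2 :=
    (hasDerivAt_const _ _).prodMk (hasDerivAt_id p.2)
  have := hf.hasFDerivAt.comp_hasDerivAt p.2 (by simpa using h1)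
  simpa [Function.comp_def] using this

lemma pt_eq (f : ℝ × ℝ → α) (p : ℝ × ℝ) (hf : DifferentiableAt ℝ f p) :
    pt f p = fderiv ℝ f p (0, 1) := (hasDerivAt_sliceT f p hf).deriv

lemma hasDerivAt_sliceT' (f : ℝ × ℝ → α) (p : ℝ × ℝ) (hf : DifferentiableAt ℝ f p) :
    HasDerivAt (fun t => f (p.1, t)) (pt f p) p.2 := by
  rw [pt_eq f p hf]; exact hasDerivAt_sliceT f p hf

lemma contDiff_pu {f : ℝ × ℝ → α} (hf : ContDiff ℝ (⊤ : ℕ∞) f) : ContDiff ℝ (⊤ : ℕ∞) (pu f) := by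
  have : pu f = fun p => fderiv ℝ f p (1, 0) :=
    funext fun p => pu_eq f p (hf.differentiable (by simp) p)
  rw [this]
  exact (hf.fderiv_right (by simp)).clm_apply contDiff_const

lemma contDiff_pt {f : ℝ × ℝ → α} (hf : ContDiff ℝ (⊤ : ℕ∞) f) : ContDiff ℝ (⊤ : ℕ∞) (pt f) := by
  have : pt f = fun p => fderiv ℝ f p (0, 1) :=
    funext fun p => pt_eq f p (hf.differentiable (by simp) p)
  rw [this]
  exact (hf.fderiv_right (by simp)).clm_apply contDiff_const

lemma pt_pu_comm {f : ℝ × ℝ → α} (hf : ContDiff ℝ (⊤ : ℕ∞) f) (p : ℝ × ℝ) :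
    pt (pu f) p = pu (pt f) p := by
  have hA : ContDiff ℝ (⊤ : ℕ∞) (fderiv ℝ f) := hf.fderiv_right (by simp)
  have hAd : DifferentiableAt ℝ (fderiv ℝ f) p := hA.differentiable (by simp) p
  have hpu : pu f = fun q => fderiv ℝ f q (1, 0) :=
    funext fun q => pu_eq f q (hf.differentiable (by simp) q)
  have hptf : pt f = fun q => fderiv ℝ f q (0, 1) :=
    funext fun q => pt_eq f q (hf.differentiable (by simp) q)
  have hsymm : ∀ v w, fderiv ℝ (fderiv ℝ f) p v w = fderiv ℝ (fderiv ℝ f) p w v := by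
    intro v w
    exact second_derivative_symmetric
      (fun y => (hf.differentiable (by simp) y).hasFDerivAt) hAd.hasFDerivAt v w
  have e1 : pt (pu f) p = fderiv ℝ (fderiv ℝ f) p (0, 1) (1, 0) := by
    rw [hpu]
    have hd : DifferentiableAt ℝ (fun q => fderiv ℝ f q (1, 0)) p :=
      hAd.clm_apply (differentiableAt_const _)
    rw [pt_eq _ _ hd, fderiv_clm_apply hAd (differentiableAt_const _)]
    simp
  have e2 : pu (pt f) p = fderiv ℝ (fderiv ℝ f) p (1, 0) (0, 1) := by
    rw [hptf]
    have hd : DifferentiableAt ℝ (fun q => fderiv ℝ f q (0, 1)) p :=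
      hAd.clm_apply (differentiableAt_const _)
    rw [pu_eq _ _ hd, fderiv_clm_apply hAd (differentiableAt_const _)]
    simp
  rw [e1, e2, hsymm]

lemma pu_smul (c : ℝ × ℝ → ℝ) (f : ℝ × ℝ → α) (p : ℝ × ℝ)
    (hc : DifferentiableAt ℝ c p) (hf : DifferentiableAt ℝ f p) :
    pu (fun q => c q • f q) p = pu c p • f p + c p • pu f p := by
  have h := (hasDerivAt_sliceU' c p hc).fun_smul (hasDerivAt_sliceU' f p hf)
  simpa [pu, add_comm] using h.deriv

lemma pu_add3 (f₁ f₂ f₃ : ℝ × ℝ → α) (p : ℝ × ℝ)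
    (h₁ : DifferentiableAt ℝ f₁ p) (h₂ : DifferentiableAt ℝ f₂ p)
    (h₃ : DifferentiableAt ℝ f₃ p) :
    pu (fun q => f₁ q + f₂ q + f₃ q) p = pu f₁ p + pu f₂ p + pu f₃ p := by
  have h := ((hasDerivAt_sliceU' f₁ p h₁).fun_add (hasDerivAt_sliceU' f₂ p h₂)).fun_add
    (hasDerivAt_sliceU' f₃ p h₃)
  simpa [pu] using h.deriv

end Aux

section AuxInner

variable {E : Type*} [NormedAddCommGroup E] [InnerProductSpace ℝ E]

lemma pu_inner (f h : ℝ × ℝ → E) (p : ℝ × ℝ)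
    (hf : DifferentiableAt ℝ f p) (hh : DifferentiableAt ℝ h p) :
    pu (fun q => (inner ℝ (f q) (h q) : ℝ)) p
      = inner ℝ (f p) (pu h p) + inner ℝ (pu f p) (h p) := by
  have hd := (hasDerivAt_sliceU' f p hf).inner ℝ (hasDerivAt_sliceU' h p hh)
  simpa [pu] using hd.deriv

lemma hasDerivAt_norm_sliceT (f : ℝ × ℝ → E) (p : ℝ × ℝ)
    (hf : DifferentiableAt ℝ f p) (hne : f p ≠ 0) :
    HasDerivAt (fun t => ‖f (p.1, t)‖) ((inner ℝ (pt f p) (f p) : ℝ) / ‖f p‖) p.2 := by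
  have hd := (hasDerivAt_sliceT' f p hf).inner ℝ (hasDerivAt_sliceT' f p hf)
  have hne' : (inner ℝ (f (p.1, p.2)) (f (p.1, p.2)) : ℝ) ≠ 0 := by
    rw [inner_self_ne_zero]; simpa using hne
  have hs := hd.sqrt hne'
  have heq : (fun t => Real.sqrt (inner ℝ (f (p.1, t)) (f (p.1, t)) : ℝ))
      = fun t => ‖f (p.1, t)‖ := by
    funext t; rw [norm_eq_sqrt_real_inner]
  rw [heq] at hs
  convert hs using 1
  have hfp : f (p.1, p.2) = f p := by rw [Prod.mk.eta]
  rw [hfp, real_inner_comm (f p) (pt f p), ← norm_eq_sqrt_real_inner]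
  ring

end AuxInner

lemma inner_cross3_left (a b : EuclideanSpace ℝ (Fin 3)) :
    (inner ℝ (cross3 a b) a : ℝ) = 0 := by
  simp [cross3, PiLp.inner_apply, Fin.sum_univ_three, WithLp.equiv_symm_apply, PiLp.toLp_apply]
  ring

lemma inner_cross3_right (a b : EuclideanSpace ℝ (Fin 3)) :
    (inner ℝ (cross3 a b) b : ℝ) = 0 := by
  simp [cross3, PiLp.inner_apply, Fin.sum_univ_three, WithLp.equiv_symm_apply, PiLp.toLp_apply]
  ring

lemma contDiff_cross3 {f h : ℝ × ℝ → EuclideanSpace ℝ (Fin 3)}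
    (hf : ContDiff ℝ (⊤ : ℕ∞) f) (hh : ContDiff ℝ (⊤ : ℕ∞) h) :
    ContDiff ℝ (⊤ : ℕ∞) (fun p => cross3 (f p) (h p)) := by
  have hfc : ∀ i, ContDiff ℝ (⊤ : ℕ∞) (fun p => f p i) := contDiff_euclidean.mp hf
  have hhc : ∀ i, ContDiff ℝ (⊤ : ℕ∞) (fun p => h p i) := contDiff_euclidean.mp hh
  rw [contDiff_euclidean]
  intro i
  fin_cases i <;>
    simp only [cross3, WithLp.equiv_symm_apply, PiLp.toLp_apply] <;>
    simp [Matrix.cons_val_zero, Matrix.cons_val_one] <;>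
    exact ((hfc _).mul (hhc _)).sub ((hfc _).mul (hhc _))

lemma hasDerivAt_param_integral (f : ℝ × ℝ → ℝ) (hf : ContDiff ℝ (⊤ : ℕ∞) f) (t : ℝ) :
    HasDerivAt (fun τ => ∫ u in (0:ℝ)..1, f (u, τ)) (∫ u in (0:ℝ)..1, pt f (u, t)) t := by
  have hc : Continuous f := hf.continuous
  have hc' : Continuous (pt f) := (contDiff_pt hf).continuous
  set K : Set (ℝ × ℝ) := Set.Icc 0 1 ×ˢ Set.Icc (t - 1) (t + 1) with hK
  have hKc : IsCompact K := isCompact_Icc.prod isCompact_Icc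
  obtain ⟨M, hM⟩ := hKc.exists_bound_of_continuousOn hc'.continuousOn
  have key := intervalIntegral.hasDerivAt_integral_of_dominated_loc_of_deriv_le
    (F := fun x u => f (u, x)) (F' := fun x u => pt f (u, x)) (x₀ := t)
    (a := (0:ℝ)) (b := 1) (bound := fun _ => M) (μ := volume) (Metric.ball_mem_nhds t one_pos)
    (Filter.Eventually.of_forall fun x =>
      ((hc.comp (continuous_id.prodMk continuous_const)).aestronglyMeasurable))
    ((hc.comp (continuous_id.prodMk continuous_const)).intervalIntegrable _ _)
    ((hc'.comp (continuous_id.prodMk continuous_const)).aestronglyMeasurable)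
    (Filter.Eventually.of_forall fun u hu => fun x hx => by
      apply hM
      constructor
      · exact Set.mem_Icc_of_Ioc (by simpa [Set.uIoc_of_le (by norm_num : (0:ℝ) ≤ 1)] using hu)
      · have := Metric.mem_ball.mp hx
        rw [Real.dist_eq] at this
        constructor <;> linarith [abs_lt.mp this |>.1, abs_lt.mp this |>.2])
    (intervalIntegrable_const)
    (Filter.Eventually.of_forall fun u hu => fun x hx =>
      hasDerivAt_sliceT' f (u, x) (hf.differentiable (by simp) _))
  exact key.2

theorem uniform_redistribution
    (X : ℝ × ℝ → EuclideanSpace ℝ (Fin 3)) (vN vB vT : ℝ × ℝ → ℝ)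
    (g κ τ : ℝ × ℝ → ℝ) (T N B : ℝ × ℝ → EuclideanSpace ℝ (Fin 3))
    (hX : ContDiff ℝ (⊤ : ℕ∞) X) (hXper : ∀ u t : ℝ, X (u + 1, t) = X (u, t))
    (hvN : ContDiff ℝ (⊤ : ℕ∞) vN) (hvNper : ∀ u t : ℝ, vN (u + 1, t) = vN (u, t))
    (hvB : ContDiff ℝ (⊤ : ℕ∞) vB) (hvBper : ∀ u t : ℝ, vB (u + 1, t) = vB (u, t))
    (hvT : ContDiff ℝ (⊤ : ℕ∞) vT) (hvTper : ∀ u t : ℝ, vT (u + 1, t) = vT (u, t))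
    (hg : ∀ p : ℝ × ℝ, g p = ‖pu X p‖) (hgpos : ∀ p : ℝ × ℝ, 0 < g p)
    (hT : ∀ p : ℝ × ℝ, T p = Ds X X p)
    (hκ : ∀ p : ℝ × ℝ, κ p = ‖Ds X T p‖) (hκpos : ∀ p : ℝ × ℝ, 0 < κ p)
    (hN : ∀ p : ℝ × ℝ, N p = (κ p)⁻¹ • Ds X T p)
    (hB : ∀ p : ℝ × ℝ, B p = cross3 (T p) (N p))
    (hτ : ∀ p : ℝ × ℝ, τ p = -(inner ℝ (Ds X B p) (N p) : ℝ))
    (hflow : ∀ p : ℝ × ℝ, pt X p = vN p • N p + vB p • B p + vT p • T p)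
    (L : ℝ → ℝ)
    (hL : ∀ t : ℝ, L t = ∫ u in (0:ℝ)..1, g (u, t))
    (hredis : ∀ p : ℝ × ℝ,
      Ds X vT p = κ p * vN p
        - (L p.2)⁻¹ * ∫ u in (0:ℝ)..1, κ (u, p.2) * vN (u, p.2) * g (u, p.2)) :
    ∀ u ∈ Set.Icc (0:ℝ) 1, ∀ t : ℝ, 0 ≤ t →
      g (u, t) / L t = g (u, 0) / L 0 := by
  -- basic smoothness and nonvanishing
  have hXu : ContDiff ℝ (⊤ : ℕ∞) (pu X) := contDiff_pu hX
  have hXune : ∀ p, pu X p ≠ 0 := fun p => by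
    have : (0:ℝ) < ‖pu X p‖ := hg p ▸ hgpos p
    exact norm_pos_iff.mp this
  have hgX : g = fun p => ‖pu X p‖ := funext hg
  have hgsm : ContDiff ℝ (⊤ : ℕ∞) g := by rw [hgX]; exact hXu.norm ℝ hXune
  have hgne : ∀ p, g p ≠ 0 := fun p => (hgpos p).ne'
  have hTeq : T = fun p => (g p)⁻¹ • pu X p := by
    funext p; rw [hT p]; simp [Ds, hg p]
  have hTsm : ContDiff ℝ (⊤ : ℕ∞) T := by
    rw [hTeq]; exact (hgsm.inv hgne).smul hXu
  have hTu : ContDiff ℝ (⊤ : ℕ∞) (pu T) := contDiff_pu hTsm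
  have hDsT : ∀ p, Ds X T p = (g p)⁻¹ • pu T p := fun p => by simp [Ds, hg p]
  have hDsTne : ∀ p, Ds X T p ≠ 0 := fun p => by
    have : (0:ℝ) < ‖Ds X T p‖ := hκ p ▸ hκpos p
    exact norm_pos_iff.mp this
  have hκsm : ContDiff ℝ (⊤ : ℕ∞) κ := by
    have : κ = fun p => ‖(g p)⁻¹ • pu T p‖ := by
      funext p; rw [hκ p, hDsT p]
    rw [this]
    refine ContDiff.norm ℝ ((hgsm.inv hgne).smul hTu) (fun p => ?_)
    rw [← hDsT p]; exact hDsTne p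
  have hκne : ∀ p, κ p ≠ 0 := fun p => (hκpos p).ne'
  have hNeq : N = fun p => (κ p)⁻¹ • ((g p)⁻¹ • pu T p) := by
    funext p; rw [hN p, hDsT p]
  have hNsm : ContDiff ℝ (⊤ : ℕ∞) N := by
    rw [hNeq]; exact (hκsm.inv hκne).smul ((hgsm.inv hgne).smul hTu)
  have hBeq : B = fun p => cross3 (T p) (N p) := funext hB
  have hBsm : ContDiff ℝ (⊤ : ℕ∞) B := by rw [hBeq]; exact contDiff_cross3 hTsm hNsm
  -- pointwise facts
  have hpuXeq : ∀ p, pu X p = g p • T p := fun p => by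
    rw [hTeq]; simp [smul_smul, mul_inv_cancel₀ (hgne p)]
  have hpuTeq : ∀ p, pu T p = (κ p * g p) • N p := fun p => by
    rw [hNeq]
    simp only [smul_smul]
    rw [show κ p * g p * ((κ p)⁻¹ * (g p)⁻¹) = (κ p * (κ p)⁻¹) * (g p * (g p)⁻¹) by ring,
      mul_inv_cancel₀ (hκne p), mul_inv_cancel₀ (hgne p)]
    simp
  have hTnorm : ∀ p, ‖T p‖ = 1 := fun p => by
    rw [hTeq]
    simp only [norm_smul, norm_inv, Real.norm_eq_abs, abs_of_pos (hgpos p)]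
    rw [← hg p]
    exact inv_mul_cancel₀ (hgne p)
  have hNnorm : ∀ p, ‖N p‖ = 1 := fun p => by
    rw [hN p]
    simp only [norm_smul, norm_inv, Real.norm_eq_abs, abs_of_pos (hκpos p), ← hκ p]
    exact inv_mul_cancel₀ (hκne p)
  have hTT : ∀ p, (inner ℝ (T p) (T p) : ℝ) = 1 := fun p => by
    rw [real_inner_self_eq_norm_mul_norm, hTnorm p]; norm_num
  have hNN : ∀ p, (inner ℝ (N p) (N p) : ℝ) = 1 := fun p => by
    rw [real_inner_self_eq_norm_mul_norm, hNnorm p]; norm_num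
  have hBT : ∀ p, (inner ℝ (B p) (T p) : ℝ) = 0 := fun p => by
    rw [hB p]; exact inner_cross3_left _ _
  have hBN : ∀ p, (inner ℝ (B p) (N p) : ℝ) = 0 := fun p => by
    rw [hB p]; exact inner_cross3_right _ _
  -- differentiability shortcuts
  have dT : ∀ p, DifferentiableAt ℝ T p := fun p => hTsm.differentiable (by simp) p
  have dN : ∀ p, DifferentiableAt ℝ N p := fun p => hNsm.differentiable (by simp) p
  have dB : ∀ p, DifferentiableAt ℝ B p := fun p => hBsm.differentiable (by simp) p
  have dvN : ∀ p, DifferentiableAt ℝ vN p := fun p => hvN.differentiable (by simp) p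
  have dvB : ∀ p, DifferentiableAt ℝ vB p := fun p => hvB.differentiable (by simp) p
  have dvT : ∀ p, DifferentiableAt ℝ vT p := fun p => hvT.differentiable (by simp) p
  -- ⟨∂ᵤT, T⟩ = 0
  have hpuTT : ∀ p, (inner ℝ (pu T p) (T p) : ℝ) = 0 := fun p => by
    have h0 : pu (fun q => (inner ℝ (T q) (T q) : ℝ)) p = 0 := by
      rw [show (fun q => (inner ℝ (T q) (T q) : ℝ)) = fun _ => (1:ℝ) from funext hTT]
      simp [pu]
    have h1 := pu_inner T T p (dT p) (dT p)
    rw [h0] at h1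
    have h2 : (inner ℝ (T p) (pu T p) : ℝ) = inner ℝ (pu T p) (T p) := real_inner_comm _ _
    linarith [h1, h2]
  have hNT : ∀ p, (inner ℝ (N p) (T p) : ℝ) = 0 := fun p => by
    have : (inner ℝ (N p) (T p) : ℝ)
        = (κ p)⁻¹ * ((g p)⁻¹ * (inner ℝ (pu T p) (T p) : ℝ)) := by
      rw [hNeq]
      show (inner ℝ ((κ p)⁻¹ • ((g p)⁻¹ • pu T p)) (T p) : ℝ) = _
      rw [real_inner_smul_left, real_inner_smul_left]
    rw [this, hpuTT p]
    ring
  -- ⟨∂ᵤN, T⟩ = -κ g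
  have hpuNT : ∀ p, (inner ℝ (pu N p) (T p) : ℝ) = -(κ p * g p) := fun p => by
    have h0 : pu (fun q => (inner ℝ (N q) (T q) : ℝ)) p = 0 := by
      rw [show (fun q => (inner ℝ (N q) (T q) : ℝ)) = fun _ => (0:ℝ) from funext hNT]
      simp [pu]
    have h1 := pu_inner N T p (dN p) (dT p)
    rw [h0] at h1
    have h2 : (inner ℝ (N p) (pu T p) : ℝ) = κ p * g p := by
      rw [hpuTeq p, real_inner_smul_right, hNN p]; ring
    linarith [h1, h2]
  -- ⟨∂ᵤB, T⟩ = 0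
  have hpuBT : ∀ p, (inner ℝ (pu B p) (T p) : ℝ) = 0 := fun p => by
    have h0 : pu (fun q => (inner ℝ (B q) (T q) : ℝ)) p = 0 := by
      rw [show (fun q => (inner ℝ (B q) (T q) : ℝ)) = fun _ => (0:ℝ) from funext hBT]
      simp [pu]
    have h1 := pu_inner B T p (dB p) (dT p)
    rw [h0] at h1
    have h2 : (inner ℝ (B p) (pu T p) : ℝ) = 0 := by
      rw [hpuTeq p, real_inner_smul_right, hBN p]; ring
    linarith [h1, h2]
  -- the first variation of g
  set I : ℝ → ℝ := fun t => ∫ u in (0:ℝ)..1, κ (u, t) * vN (u, t) * g (u, t) with hI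
  have hptXeq : pt X = fun q => vN q • N q + vB q • B q + vT q • T q := funext hflow
  have hpuvT : ∀ p, pu vT p = g p * (κ p * vN p - (L p.2)⁻¹ * I p.2) := fun p => by
    have h := hredis p
    simp only [Ds, ← hg p, smul_eq_mul] at h
    have h2 : g p * ((g p)⁻¹ * pu vT p) = g p * (κ p * vN p - (L p.2)⁻¹ * I p.2) := by
      rw [h]
    rwa [← mul_assoc, mul_inv_cancel₀ (hgne p), one_mul] at h2
  have hptg : ∀ p, pt g p = -((L p.2)⁻¹ * I p.2) * g p := by
    intro p
    -- pt g p = ⟪pt (pu X) p, T p⟫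
    have hptg1 : pt g p = (inner ℝ (pt (pu X) p) (T p) : ℝ) := by
      have hnd := hasDerivAt_norm_sliceT (pu X) p (hXu.differentiable (by simp) p) (hXune p)
      have : pt g p = (inner ℝ (pt (pu X) p) (pu X p) : ℝ) / ‖pu X p‖ := by
        have hfun : (fun t => g (p.1, t)) = fun t => ‖pu X (p.1, t)‖ := by
          funext s; rw [hg]
        show deriv (fun t => g (p.1, t)) p.2 = _
        rw [hfun]
        exact hnd.deriv
      rw [this, hpuXeq p, real_inner_smul_right, ← hpuXeq p, hg p, hpuXeq p,
        norm_smul, Real.norm_eq_abs, abs_of_pos (hgpos p), hTnorm p]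
      rw [mul_comm (g p)]
      field_simp [hgne p]
    rw [hptg1, pt_pu_comm hX p]
    -- expand pu (pt X)
    have hexp : pu (pt X) p
        = (pu vN p • N p + vN p • pu N p) + (pu vB p • B p + vB p • pu B p)
          + (pu vT p • T p + vT p • pu T p) := by
      rw [hptXeq]
      rw [pu_add3 _ _ _ p ((dvN p).fun_smul (dN p)) ((dvB p).fun_smul (dB p)) ((dvT p).fun_smul (dT p))]
      rw [pu_smul vN N p (dvN p) (dN p), pu_smul vB B p (dvB p) (dB p),
        pu_smul vT T p (dvT p) (dT p)]
    rw [hexp]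
    simp only [inner_add_left, real_inner_smul_left]
    rw [hNT p, hpuNT p, hBT p, hpuBT p, hTT p, hpuTT p, hpuvT p]
    ring
  -- positivity of L
  have hgslice_cont : ∀ t : ℝ, Continuous (fun u => g (u, t)) := fun t =>
    hgsm.continuous.comp (continuous_id.prodMk continuous_const)
  have hLpos : ∀ t, 0 < L t := fun t => by
    rw [hL t]
    exact intervalIntegral.intervalIntegral_pos_of_pos ((hgslice_cont t).intervalIntegrable _ _)
      (fun u => hgpos (u, t)) one_pos
  have hLne : ∀ t, L t ≠ 0 := fun t => (hLpos t).ne'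
  -- derivative of L
  have hL' : ∀ t, HasDerivAt L (-(I t)) t := by
    intro t
    have h0 : L = fun τ => ∫ u in (0:ℝ)..1, g (u, τ) := funext hL
    have h1 := hasDerivAt_param_integral g hgsm t
    rw [← h0] at h1
    have h2 : (∫ u in (0:ℝ)..1, pt g (u, t)) = -(I t) := by
      have h3 : (fun u => pt g (u, t)) = fun u => -((L t)⁻¹ * I t) * g (u, t) := by
        funext u; exact hptg (u, t)
      rw [h3, intervalIntegral.integral_const_mul, ← hL t]
      field_simp [hLne t]
    rwa [h2] at h1
  -- conclusion
  intro u _ t _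
  have hFd : ∀ s : ℝ, HasDerivAt (fun τ => g (u, τ) / L τ) 0 s := by
    intro s
    have hgd : HasDerivAt (fun τ => g (u, τ)) (pt g (u, s)) s :=
      hasDerivAt_sliceT' g (u, s) (hgsm.differentiable (by simp) _)
    have h := hgd.div (hL' s) (hLne s)
    have hnum0 : pt g (u, s) * L s - g (u, s) * -(I s) = 0 := by
      rw [hptg (u, s)]
      show -((L s)⁻¹ * I s) * g (u, s) * L s - g (u, s) * -(I s) = 0
      have h3 : (L s)⁻¹ * L s = 1 := inv_mul_cancel₀ (hLne s)
      calc -((L s)⁻¹ * I s) * g (u, s) * L s - g (u, s) * -(I s)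
          = -(((L s)⁻¹ * L s) * I s * g (u, s)) + g (u, s) * I s := by ring
        _ = 0 := by rw [h3]; ring
    rwa [hnum0, zero_div] at h
  have hdiff : Differentiable ℝ (fun τ => g (u, τ) / L τ) := fun s =>
    (hFd s).differentiableAt
  have hconst := is_const_of_deriv_eq_zero hdiff (fun s => (hFd s).deriv) t 0
  exact hconst
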